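/- Let ρ: SL(2,Z) → GL(d,C) be an irreducible representation of dimension d ≤ 4 such that the eigenvalues of ρ(T) are e^{2πi r_1},...,e^{2πi r_d} for real numbers r_j. Then d divides 12(r_1 + ··· + r_d). -/

import Mathlib

/-!
Since `det ρ(T) = exp (2πi ∑ r_j)`, it suffices to show `det ρ(T) ^ (12 / d) = 1`.
Write `T = R S` with `R³ = 1` and `S² = -1`. By Schur's lemma `ρ(S)² = c` is a scalar with
`c² = 1`, so `ρ(S)` and `ρ(R)` are diagonalizable, `det ρ(S)⁴ = 1`, `det ρ(S)² = c^d` and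
`det ρ(R)³ = 1`; this settles `d = 1, 2`. As `S` and `R` generate `SL(2,ℤ)`, a common eigenvector
of `ρ(S)` and `ρ(R)` spans an invariant line, so for `d ≥ 2` an eigenspace of `ρ(S)` and one of
`ρ(R)` meet trivially and their dimensions add up to at most `d`. For `d = 3` this forces the
eigenspaces of `ρ(R)` for `1, ω, ω²` to be lines, so `det ρ(R) = ω³ = 1`; for `d = 4` it forces
the eigenspaces of `ρ(S)` for the two square roots of `c` to be planes, so `det ρ(S) = c² = 1`.
-/
set_option autoImplicit false

open Matrix MatrixGroups Complex Polynomial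

/-- Irreducibility: the only invariant subspaces of `ℂ^d` are `0` and `ℂ^d`. -/
def RepIrreducible {d : ℕ} (ρ : SL(2,ℤ) →* GL (Fin d) ℂ) : Prop :=
  ∀ U : Submodule ℂ (Fin d → ℂ),
    (∀ γ : SL(2,ℤ), ∀ v ∈ U, (ρ γ).val.mulVec v ∈ U) → U = ⊥ ∨ U = ⊤

open Module Module.End ModularGroup

namespace ModularGroup

def R : SL(2,ℤ) := ⟨!![-1, 1; -1, 0], by simp [det_fin_two]⟩

lemma S_mul_S : S * S = -1 := by decide

lemma R_pow_three : R ^ 3 = 1 := by decide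

lemma R_mul_S : R * S = T := by decide

lemma submonoidClosure_S_R_eq_top : Submonoid.closure {S, R} = ⊤ := by
  have hfin : ∀ x ∈ ({S, R} : Set SL(2,ℤ)), IsOfFinOrder x := by
    rintro x (rfl | rfl)
    · exact isOfFinOrder_iff_pow_eq_one.mpr ⟨4, by norm_num, by decide⟩
    · exact isOfFinOrder_iff_pow_eq_one.mpr ⟨3, by norm_num, R_pow_three⟩
  rw [← Subgroup.closure_toSubmonoid_of_isOfFinOrder hfin, eq_top_iff,
    ← Subgroup.top_toSubmonoid, Subgroup.toSubmonoid_le, ← SpecialLinearGroup.SL2Z_generators,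
    Subgroup.closure_le]
  have hS : S ∈ Subgroup.closure ({S, R} : Set SL(2,ℤ)) := Subgroup.subset_closure (by simp)
  have hR : R ∈ Subgroup.closure ({S, R} : Set SL(2,ℤ)) := Subgroup.subset_closure (by simp)
  rintro x (rfl | rfl)
  · exact hS
  · exact R_mul_S ▸ mul_mem hR hS

end ModularGroup

theorem Matrix.det_eq_prod_of_charpoly_eq_prod {n A : Type*} [Fintype n] [DecidableEq n]
    [CommRing A] {M : Matrix n n A} {a : n → A} (h : M.charpoly = ∏ j, (X - C (a j))) :
    M.det = ∏ j, a j := by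
  rw [det_eq_sign_charpoly_coeff, h, coeff_zero_eq_eval_zero, eval_prod]
  simp [Finset.prod_neg, ← mul_assoc, ← pow_add, ← two_mul, pow_mul]

theorem Polynomial.card_nthRootsFinset_le {A : Type*} [CommRing A] [IsDomain A] (n : ℕ) (a : A) :
    (nthRootsFinset n a).card ≤ n := by
  classical
  rw [nthRootsFinset_def]
  exact (Multiset.toFinset_card_le _).trans (card_nthRoots n a)

theorem IsPrimitiveRoot.prod_nthRootsFinset_one {A : Type*} [CommRing A] [IsDomain A] {ζ : A}
    {n : ℕ} (h : IsPrimitiveRoot ζ n) (hn : 0 < n) :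
    ∏ ν ∈ nthRootsFinset n (1 : A), ν = (-1) ^ (n + 1) := by
  have hprod := h.pow_sub_pow_eq_prod_sub_mul 0 1 hn
  simp only [zero_pow hn.ne', one_pow, zero_sub, mul_one] at hprod
  rw [Finset.prod_neg, h.card_nthRootsFinset] at hprod
  have hsq : ((-1 : A) ^ n) ^ 2 = 1 := by rw [← pow_mul, pow_mul', neg_one_sq, one_pow]
  linear_combination (-(-1 : A) ^ n) * hprod - (∏ ν ∈ nthRootsFinset n (1 : A), ν) * hsq

theorem Complex.exists_int_mul_eq_of_exp_pow_eq_one {x : ℝ} {k : ℕ}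
    (h : cexp (2 * Real.pi * I * x) ^ k = 1) : ∃ n : ℤ, k * x = n := by
  rw [← Complex.exp_nat_mul, Complex.exp_eq_one_iff] at h
  obtain ⟨n, hn⟩ := h
  refine ⟨n, Complex.ofReal_injective ?_⟩
  have hπ : (2 * Real.pi * I : ℂ) ≠ 0 := by simp [Real.pi_ne_zero, I_ne_zero]
  push_cast
  exact mul_right_cancel₀ hπ (by linear_combination hn)

namespace Module.End

variable {K V : Type*} [Field K] [AddCommGroup V] [Module K V] {f : End K V}

theorem isInternal_eigenspace_of_iSup_eq_top [DecidableEq K] {s : Finset K}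
    (hs : ⨆ μ ∈ s, f.eigenspace μ = ⊤) : DirectSum.IsInternal fun μ : s => f.eigenspace μ := by
  refine DirectSum.isInternal_submodule_of_iSupIndep_of_iSup_eq_top
    (f.eigenspaces_iSupIndep.comp Subtype.val_injective) ?_
  rwa [iSup_subtype'] at hs

variable [FiniteDimensional K V]

theorem iSup_eigenspace_nthRootsFinset_eq_top [IsAlgClosed K] {n : ℕ} {a : K}
    (hn : (n : K) ≠ 0) (ha : a ≠ 0) (hf : f ^ n = algebraMap K (End K V) a) :
    ⨆ μ ∈ nthRootsFinset n a, f.eigenspace μ = ⊤ := by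
  have hf' : aeval f (X ^ n - C a) = 0 := by simp [hf]
  have hss : f.IsSemisimple :=
    isSemisimple_of_squarefree_aeval_eq_zero (separable_X_pow_sub_C a hn ha).squarefree hf'
  rw [eq_top_iff, ← hss.iSup_eigenspace_eq_top]
  refine iSup_le fun μ => ?_
  by_cases hμ : f.HasEigenvalue μ
  · have hroot : (X ^ n - C a).IsRoot μ :=
      (isRoot_of_hasEigenvalue hμ).dvd (minpoly.dvd K f hf')
    have hpos : 0 < n := Nat.pos_of_ne_zero (by rintro rfl; simp at hn)
    refine le_biSup _ ((mem_nthRootsFinset hpos a).mpr ?_)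
    simpa [sub_eq_zero] using hroot
  · simp [hasEigenvalue_iff.not_left.mp hμ]

variable {s : Finset K} (hs : ⨆ μ ∈ s, f.eigenspace μ = ⊤)
include hs

theorem sum_finrank_eigenspace : ∑ μ ∈ s, finrank K (f.eigenspace μ) = finrank K V := by
  classical
  let b := (isInternal_eigenspace_of_iSup_eq_top hs).collectedBasis fun μ => finBasis K _
  rw [finrank_eq_card_basis b, Fintype.card_sigma, ← Finset.sum_coe_sort s]
  simp

theorem det_eq_prod_pow_finrank_eigenspace :
    LinearMap.det f = ∏ μ ∈ s, μ ^ finrank K (f.eigenspace μ) := by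
  classical
  have hint := isInternal_eigenspace_of_iSup_eq_top hs
  let b := hint.collectedBasis fun μ => finBasis K _
  have hdiag : LinearMap.toMatrix b b f = diagonal fun p => (p.1 : K) := by
    ext p q
    rw [LinearMap.toMatrix_apply, mem_eigenspace_iff.mp (hint.collectedBasis_mem _ q),
      map_smul, b.repr_self]
    rcases eq_or_ne p q with rfl | hpq
    · simp
    · simp [diagonal_apply_ne _ hpq, hpq.symm]
  rw [← LinearMap.det_toMatrix b, hdiag, det_diagonal, Fintype.prod_sigma,
    ← Finset.prod_coe_sort s]
  simp

theorem finrank_eigenspace_eq_of_le {n k : ℕ} (hcard : s.card ≤ n) (hV : finrank K V = n * k)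
    (hle : ∀ μ ∈ s, finrank K (f.eigenspace μ) ≤ k) :
    ∀ μ ∈ s, finrank K (f.eigenspace μ) = k := by
  refine (Finset.sum_eq_sum_iff_of_le hle).mp (le_antisymm (Finset.sum_le_sum hle) ?_)
  rw [Finset.sum_const, smul_eq_mul, sum_finrank_eigenspace hs, hV]
  exact Nat.mul_le_mul_right k hcard

theorem exists_le_mul_finrank_eigenspace [Nontrivial V] {n : ℕ} (hcard : s.card ≤ n) :
    ∃ μ ∈ s, finrank K V ≤ n * finrank K (f.eigenspace μ) := by
  have hne : s.Nonempty := by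
    rw [Finset.nonempty_iff_ne_empty]
    rintro rfl
    simp at hs
  refine Finset.exists_le_of_sum_le hne ?_
  rw [Finset.sum_const, smul_eq_mul, ← Finset.mul_sum, sum_finrank_eigenspace hs]
  exact Nat.mul_le_mul_right _ hcard

end Module.End

def linearRep {G n K : Type*} [Monoid G] [Fintype n] [DecidableEq n] [CommRing K]
    (ρ : G →* GL n K) : Representation K G (n → K) :=
  (toLinAlgEquiv' : Matrix n n K ≃ₐ[K] _).toMonoidHom.comp ((Units.coeHom _).comp ρ)

section linearRep

variable {G n K : Type*} [Monoid G] [Fintype n] [DecidableEq n] [CommRing K]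
  (ρ : G →* GL n K) (g : G)

@[simp] lemma linearRep_apply (v : n → K) : linearRep ρ g v = (ρ g).val *ᵥ v := rfl

lemma det_linearRep : LinearMap.det (linearRep ρ g) = (ρ g).val.det :=
  LinearMap.det_toLin' _

end linearRep

section SL2

variable {n : Type*} [Fintype n] [DecidableEq n]

lemma linearRep_R_pow_three {K : Type*} [CommRing K] (ρ : SL(2,ℤ) →* GL n K) :
    linearRep ρ R ^ 3 = 1 := by
  rw [← map_pow, R_pow_three, map_one]

theorem iSup_eigenspace_linearRep_R_eq_top (ρ : SL(2,ℤ) →* GL n ℂ) :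
    ⨆ μ ∈ nthRootsFinset 3 (1 : ℂ), eigenspace (linearRep ρ R) μ = ⊤ :=
  iSup_eigenspace_nthRootsFinset_eq_top (by norm_num) one_ne_zero
    (by rw [map_one, linearRep_R_pow_three])

end SL2

namespace RepIrreducible

variable {d : ℕ} {ρ : SL(2,ℤ) →* GL (Fin d) ℂ} (hρ : RepIrreducible ρ)
include hρ

theorem eq_bot_or_eq_top_of_S_R {U : Submodule ℂ (Fin d → ℂ)}
    (hS : ∀ v ∈ U, linearRep ρ S v ∈ U) (hR : ∀ v ∈ U, linearRep ρ R v ∈ U) :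
    U = ⊥ ∨ U = ⊤ := by
  refine hρ U fun γ => ?_
  have hγ : γ ∈ Submonoid.closure {S, R} := submonoidClosure_S_R_eq_top ▸ Submonoid.mem_top γ
  show ∀ v ∈ U, linearRep ρ γ v ∈ U
  induction hγ using Submonoid.closure_induction with
  | mem x hx => rcases hx with rfl | rfl <;> assumption
  | one => simp
  | mul x y _ _ hx hy => exact fun v hv => by simpa using hx _ (hy v hv)

theorem exists_eq_algebraMap_of_commute (f : End ℂ (Fin d → ℂ))
    (hf : ∀ γ, Commute f (linearRep ρ γ)) : ∃ c : ℂ, f = algebraMap ℂ _ c := by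
  rcases subsingleton_or_nontrivial (Fin d → ℂ) with _ | _
  · exact ⟨0, Subsingleton.elim _ _⟩
  obtain ⟨c, hc⟩ := f.exists_eigenvalue
  refine ⟨c, ?_⟩
  have hinv : ∀ γ, ∀ v ∈ f.eigenspace c, (ρ γ).val *ᵥ v ∈ f.eigenspace c := by
    intro γ v hv
    rw [mem_eigenspace_iff] at hv ⊢
    rw [← linearRep_apply, ← End.mul_apply, (hf γ).eq, End.mul_apply, hv, map_smul]
  obtain hbot | htop := hρ _ hinv
  · exact absurd hbot (hasEigenvalue_iff.mp hc)
  · refine LinearMap.ext fun v => ?_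
    have hv : v ∈ f.eigenspace c := htop ▸ Submodule.mem_top
    simpa using mem_eigenspace_iff.mp hv

theorem exists_sq_eq_one_and_linearRep_S_sq [NeZero d] :
    ∃ c : ℂ, c ^ 2 = 1 ∧ linearRep ρ S ^ 2 = algebraMap ℂ _ c := by
  obtain ⟨c, hc⟩ := hρ.exists_eq_algebraMap_of_commute (linearRep ρ (-1)) fun γ => by
    rw [Commute, SemiconjBy, ← map_mul, ← map_mul, neg_one_mul, mul_neg_one]
  refine ⟨c, (algebraMap ℂ (End ℂ (Fin d → ℂ))).injective ?_, by rw [← map_pow, sq, S_mul_S, hc]⟩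
  rw [map_pow, map_one, ← hc, ← map_pow, sq, neg_one_mul, neg_neg, map_one]

theorem disjoint_eigenspace_S_R (hd : 2 ≤ d) (μ ν : ℂ) :
    Disjoint (eigenspace (linearRep ρ S) μ) (eigenspace (linearRep ρ R) ν) := by
  rw [Submodule.disjoint_def]
  intro v hS hR
  have hinv : ∀ (f : End ℂ (Fin d → ℂ)) (t : ℂ), v ∈ f.eigenspace t →
      ∀ w ∈ ℂ ∙ v, f w ∈ ℂ ∙ v := by
    intro f t hv w hw
    obtain ⟨a, rfl⟩ := Submodule.mem_span_singleton.mp hw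
    rw [map_smul, mem_eigenspace_iff.mp hv, smul_smul]
    exact Submodule.smul_mem _ _ (Submodule.mem_span_singleton_self v)
  rcases hρ.eq_bot_or_eq_top_of_S_R (hinv _ μ hS) (hinv _ ν hR) with hbot | htop
  · exact Submodule.span_singleton_eq_bot.mp hbot
  · by_contra hv
    have hrank := finrank_span_singleton (K := ℂ) hv
    rw [htop, finrank_top, finrank_fin_fun] at hrank
    omega

theorem finrank_eigenspace_S_add_R_le (hd : 2 ≤ d) (μ ν : ℂ) :
    finrank ℂ (eigenspace (linearRep ρ S) μ) + finrank ℂ (eigenspace (linearRep ρ R) ν) ≤ d :=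
  (Submodule.finrank_add_finrank_le_of_disjoint (hρ.disjoint_eigenspace_S_R hd μ ν)).trans_eq
    (finrank_fin_fun ℂ)

theorem det_linearRep_R_eq_one (hd : d = 3) : LinearMap.det (linearRep ρ R) = 1 := by
  subst hd
  obtain ⟨c, hc, hSc⟩ := hρ.exists_sq_eq_one_and_linearRep_S_sq
  have hS := iSup_eigenspace_nthRootsFinset_eq_top (by norm_num) (by rintro rfl; simp at hc) hSc
  have hR := iSup_eigenspace_linearRep_R_eq_top ρ
  obtain ⟨μ, -, hμ⟩ := exists_le_mul_finrank_eigenspace hS (card_nthRootsFinset_le 2 c)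
  rw [finrank_fin_fun] at hμ
  have hle : ∀ ν ∈ nthRootsFinset 3 (1 : ℂ), finrank ℂ (eigenspace (linearRep ρ R) ν) ≤ 1 :=
    fun ν _ => by have := hρ.finrank_eigenspace_S_add_R_le (by norm_num) μ ν; omega
  have hone := finrank_eigenspace_eq_of_le hR (card_nthRootsFinset_le 3 1) (by simp) hle
  rw [det_eq_prod_pow_finrank_eigenspace hR,
    Finset.prod_congr rfl fun ν hν => by rw [hone ν hν, pow_one],
    (Complex.isPrimitiveRoot_exp 3 (by norm_num)).prod_nthRootsFinset_one (by norm_num)]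
  norm_num

theorem det_linearRep_S_eq_one (hd : d = 4) : LinearMap.det (linearRep ρ S) = 1 := by
  subst hd
  obtain ⟨c, hc, hSc⟩ := hρ.exists_sq_eq_one_and_linearRep_S_sq
  have hS := iSup_eigenspace_nthRootsFinset_eq_top (by norm_num) (by rintro rfl; simp at hc) hSc
  have hR := iSup_eigenspace_linearRep_R_eq_top ρ
  obtain ⟨ν, -, hν⟩ := exists_le_mul_finrank_eigenspace hR (card_nthRootsFinset_le 3 1)
  rw [finrank_fin_fun] at hν
  have hle : ∀ μ ∈ nthRootsFinset 2 c, finrank ℂ (eigenspace (linearRep ρ S) μ) ≤ 2 :=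
    fun μ _ => by have := hρ.finrank_eigenspace_S_add_R_le (by norm_num) μ ν; omega
  have htwo := finrank_eigenspace_eq_of_le hS (card_nthRootsFinset_le 2 c) (by simp) hle
  have hcard : (nthRootsFinset 2 c).card = 2 := by
    have hsum := sum_finrank_eigenspace hS
    rw [Finset.sum_congr rfl htwo, Finset.sum_const, smul_eq_mul, finrank_fin_fun] at hsum
    omega
  rw [det_eq_prod_pow_finrank_eigenspace hS,
    Finset.prod_congr rfl fun μ hμ => by rw [htwo μ hμ, (mem_nthRootsFinset two_pos c).mp hμ],
    Finset.prod_const, hcard, hc]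

theorem exists_det_pow_eq_one [NeZero d] (hd4 : d ≤ 4) :
    ∃ k : ℕ, d * k = 12 ∧ (ρ T).val.det ^ k = 1 := by
  obtain ⟨c, hc, hSc⟩ := hρ.exists_sq_eq_one_and_linearRep_S_sq
  set a := LinearMap.det (linearRep ρ S)
  set b := LinearMap.det (linearRep ρ R)
  have hT : (ρ T).val.det = b * a := by
    rw [← det_linearRep, ← R_mul_S, map_mul, map_mul]
  have ha : a ^ 2 = c ^ d := by
    rw [← map_pow, hSc, algebraMap_end_eq_smul_id, LinearMap.det_smul, LinearMap.det_id, mul_one,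
      finrank_fin_fun]
  have hb : b ^ 3 = 1 := by rw [← map_pow, linearRep_R_pow_three, map_one]
  have ha4 : a ^ 4 = 1 := by
    rw [show a ^ 4 = (a ^ 2) ^ 2 by ring, ha, ← pow_mul, mul_comm, pow_mul, hc, one_pow]
  rw [hT]
  obtain rfl | rfl | rfl | rfl : d = 1 ∨ d = 2 ∨ d = 3 ∨ d = 4 := by
    have := NeZero.ne d; omega
  · exact ⟨12, rfl, by rw [show (b * a) ^ 12 = (b ^ 3) ^ 4 * (a ^ 4) ^ 3 by ring, hb, ha4]; simp⟩
  · exact ⟨6, rfl, by rw [show (b * a) ^ 6 = (b ^ 3) ^ 2 * (a ^ 2) ^ 3 by ring, hb, ha, hc]; simp⟩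
  · exact ⟨4, rfl, by rw [show b = 1 from hρ.det_linearRep_R_eq_one rfl, one_mul, ha4]⟩
  · exact ⟨3, rfl, by rw [show a = 1 from hρ.det_linearRep_S_eq_one rfl, mul_one, hb]⟩

end RepIrreducible

theorem dim_dvd_twelve_sum_exponents {d : ℕ} (hd1 : 1 ≤ d) (hd4 : d ≤ 4)
    (ρ : SL(2,ℤ) →* GL (Fin d) ℂ) (hρ : RepIrreducible ρ) (r : Fin d → ℝ)
    (hr : (ρ ModularGroup.T).val.charpoly =
      ∏ j, (X - C (Complex.exp (2 * Real.pi * Complex.I * (r j))))) :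
    ∃ n : ℤ, 12 * ∑ j, r j = (d : ℝ) * (n : ℝ) := by
  have : NeZero d := ⟨by omega⟩
  obtain ⟨k, hdk, hk⟩ := hρ.exists_det_pow_eq_one hd4
  rw [det_eq_prod_of_charpoly_eq_prod hr, ← Complex.exp_sum, ← Finset.mul_sum] at hk
  obtain ⟨n, hn⟩ := exists_int_mul_eq_of_exp_pow_eq_one (x := ∑ j, r j) (by exact_mod_cast hk)
  refine ⟨n, ?_⟩
  rw [← hn, ← mul_assoc, ← Nat.cast_mul, hdk, Nat.cast_ofNat]
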